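/- arXiv:2406.06408 — 5 statements merged into one kernel-verified Lean document; each statement's English description precedes it below -/
import Mathlib

section
/- For a Bernoulli bandit instance ν with means μ_1 > μ_2 ≥ ... ≥ μ_K, the TV-characteristic time satisfies T*_TV(ν) = 1/Δ_min + Σ_{a=2}^K 1/Δ_a, where Δ_a = μ_1 - μ_a and Δ_min = min_{a≠1} Δ_a. -/
open scoped BigOperators

/-- Inverse TV-characteristic time for a Bernoulli instance with means `μ`
(best arm `0`):
`T*_TV(ν)⁻¹ = sup_{ω ∈ Σ_K} inf_{λ ∈ Alt(ν)} Σ_a ω_a |μ_a - λ_a|`,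
where `Alt(ν)` are Bernoulli instances (means in `[0,1]`) with a different best arm. -/
noncomputable def tvCharInvBer {K : ℕ} (μ : Fin (K + 2) → ℝ) : ℝ :=
  ⨆ ω : {ω : Fin (K + 2) → ℝ // (∀ a, 0 ≤ ω a) ∧ ∑ a, ω a = 1},
    ⨅ lam : {l : Fin (K + 2) → ℝ //
        (∀ a, l a ∈ Set.Icc (0 : ℝ) 1) ∧ ∃ a, a ≠ 0 ∧ l 0 < l a},
      ∑ a, ω.1 a * |μ a - lam.1 a|

private abbrev TVAlt (K : ℕ) := {l : Fin (K + 2) → ℝ //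
    (∀ a, l a ∈ Set.Icc (0 : ℝ) 1) ∧ ∃ a, a ≠ 0 ∧ l 0 < l a}

private abbrev TVSimplex (K : ℕ) :=
  {ω : Fin (K + 2) → ℝ // (∀ a, 0 ≤ ω a) ∧ ∑ a, ω a = 1}

/-- For a Bernoulli instance with sorted means `μ 0 > μ 1 ≥ ... ≥ μ (K+1)`,
`T*_TV(ν) = 1/Δ_min + Σ_{a ≠ 0} 1/Δ_a` with `Δ_a = μ 0 - μ a`, `Δ_min = min_{a≠0} Δ_a`. -/
theorem tv_char_time_bernoulli {K : ℕ} (μ : Fin (K + 2) → ℝ)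
    (hrange : ∀ a, μ a ∈ Set.Ioo (0 : ℝ) 1)
    (hsorted : ∀ a b : Fin (K + 2), a ≤ b → μ b ≤ μ a)
    (hbest : ∀ a, a ≠ 0 → μ a < μ 0) :
    (tvCharInvBer μ)⁻¹ =
      1 / (⨅ a : {a : Fin (K + 2) // a ≠ 0}, (μ 0 - μ a.1)) +
        ∑ a ∈ Finset.univ.filter (fun a : Fin (K + 2) => a ≠ 0), 1 / (μ 0 - μ a) := by
  classical
  have h1ne : (1 : Fin (K+2)) ≠ 0 := one_ne_zero
  have hone_le : ∀ a : Fin (K+2), a ≠ 0 → (1 : Fin (K+2)) ≤ a := by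
    intro a h
    rw [Fin.le_def, Fin.val_one]
    exact Nat.one_le_iff_ne_zero.2 (fun hv => h (Fin.ext hv))
  have hΔpos : ∀ a : Fin (K+2), a ≠ 0 → 0 < μ 0 - μ a :=
    fun a h => sub_pos.2 (hbest a h)
  have hμb : ∀ a : Fin (K+2), a ≠ 0 → μ a ≤ μ 1 := fun a h => hsorted 1 a (hone_le a h)
  haveI : Nonempty {a : Fin (K+2) // a ≠ 0} := ⟨⟨1, h1ne⟩⟩
  have hmin : (⨅ a : {a : Fin (K + 2) // a ≠ 0}, (μ 0 - μ a.1)) = μ 0 - μ 1 := by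
    apply le_antisymm
    · exact ciInf_le (Set.Finite.bddBelow (Set.finite_range _)) (⟨1, h1ne⟩ : {a : Fin (K+2) // a ≠ 0})
    · exact le_ciInf fun b => sub_le_sub_left (hμb b.1 b.2) _
  set T := Finset.univ.filter (fun a : Fin (K+2) => a ≠ 0) with hT
  have hTerase : T = Finset.univ.erase 0 := Finset.filter_ne' _ _
  have h1T : (1 : Fin (K+2)) ∈ T := by
    rw [hT]; exact Finset.mem_filter.2 ⟨Finset.mem_univ _, h1ne⟩
  have hmemT : ∀ a, a ∈ T → a ≠ 0 := fun a ha => (Finset.mem_filter.1 ha).2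
  set S : ℝ := (μ 0 - μ 1)⁻¹ + ∑ a ∈ T, (μ 0 - μ a)⁻¹ with hS
  have hSpos : 0 < S := by
    refine add_pos (inv_pos.2 (hΔpos 1 h1ne)) ?_
    exact Finset.sum_pos (fun a ha => inv_pos.2 (hΔpos a (hmemT a ha))) ⟨1, h1T⟩
  set c : ℝ := S⁻¹ with hc
  have hcpos : 0 < c := inv_pos.2 hSpos
  -- the optimal weights
  set ωs : Fin (K+2) → ℝ :=
    fun a => if a = 0 then c * (μ 0 - μ 1)⁻¹ else c * (μ 0 - μ a)⁻¹ with hωs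
  have hωnn : ∀ a, 0 ≤ ωs a := by
    intro a
    rw [hωs]
    dsimp only
    split
    · exact (mul_pos hcpos (inv_pos.2 (hΔpos 1 h1ne))).le
    · next h => exact (mul_pos hcpos (inv_pos.2 (hΔpos a h))).le
  have hωsum : ∑ a, ωs a = 1 := by
    rw [← Finset.add_sum_erase _ _ (Finset.mem_univ (0 : Fin (K+2))), ← hTerase]
    have h0 : ωs 0 = c * (μ 0 - μ 1)⁻¹ := if_pos rfl
    have h2 : ∑ a ∈ T, ωs a = ∑ a ∈ T, c * (μ 0 - μ a)⁻¹ :=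
      Finset.sum_congr rfl fun a ha => if_neg (hmemT a ha)
    rw [h0, h2, ← Finset.mul_sum, ← mul_add, ← hS, hc]
    exact inv_mul_cancel₀ hSpos.ne'
  -- bounded below
  have hbddB : ∀ ω : TVSimplex K,
      BddBelow (Set.range fun lam : TVAlt K => ∑ a, ω.1 a * |μ a - lam.1 a|) := by
    intro ω
    refine ⟨0, ?_⟩
    rintro x ⟨lam, rfl⟩
    exact Finset.sum_nonneg fun i _ => mul_nonneg (ω.2.1 i) (abs_nonneg _)
  haveI : Nonempty (TVAlt K) := by
    refine ⟨⟨fun a => if a = 0 then 0 else μ 0, fun a => ?_, ⟨1, h1ne, ?_⟩⟩⟩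
    · by_cases h : a = 0 <;>
        simp [h, Set.mem_Icc, (hrange 0).1.le, (hrange 0).2.le]
    · simp [h1ne, (hrange 0).1]
  haveI : Nonempty (TVSimplex K) := ⟨⟨ωs, hωnn, hωsum⟩⟩
  -- upper bound: for any ω the inner inf is ≤ c
  have hB : ∀ ω : TVSimplex K,
      (⨅ lam : TVAlt K, ∑ a, ω.1 a * |μ a - lam.1 a|) ≤ c := by
    intro ω
    have hωle : ∀ a, ω.1 a ≤ 1 := by
      intro a
      calc ω.1 a ≤ ∑ b, ω.1 b :=
            Finset.single_le_sum (fun b _ => ω.2.1 b) (Finset.mem_univ a)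
        _ = 1 := ω.2.2
    obtain ⟨a, ha0, hmle⟩ : ∃ a, a ≠ 0 ∧ min (ω.1 0) (ω.1 a) * (μ 0 - μ a) ≤ c := by
      by_contra hcon
      push_neg at hcon
      have hlt : ∀ a ∈ T, c * (μ 0 - μ a)⁻¹ < ω.1 a := by
        intro a haT
        have ha0 := hmemT a haT
        have h1 : c < ω.1 a * (μ 0 - μ a) :=
          lt_of_lt_of_le (hcon a ha0)
            (mul_le_mul_of_nonneg_right (min_le_right _ _) (hΔpos a ha0).le)
        have := (div_lt_iff₀ (hΔpos a ha0)).2 h1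
        rwa [div_eq_mul_inv] at this
      have h0lt : c * (μ 0 - μ 1)⁻¹ < ω.1 0 := by
        have h1 : c < ω.1 0 * (μ 0 - μ 1) :=
          lt_of_lt_of_le (hcon 1 h1ne)
            (mul_le_mul_of_nonneg_right (min_le_left _ _) (hΔpos 1 h1ne).le)
        have := (div_lt_iff₀ (hΔpos 1 h1ne)).2 h1
        rwa [div_eq_mul_inv] at this
      have : (1:ℝ) < 1 := by
        calc (1:ℝ) = c * S := (inv_mul_cancel₀ hSpos.ne').symm
          _ = c * (μ 0 - μ 1)⁻¹ + ∑ a ∈ T, c * (μ 0 - μ a)⁻¹ := by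
              rw [hS, mul_add, Finset.mul_sum]
          _ < ω.1 0 + ∑ a ∈ T, ω.1 a :=
              add_lt_add h0lt (Finset.sum_lt_sum_of_nonempty ⟨1, h1T⟩ hlt)
          _ = ∑ a, ω.1 a := by
              rw [hTerase, Finset.add_sum_erase _ _ (Finset.mem_univ (0 : Fin (K+2)))]
          _ = 1 := ω.2.2
      exact absurd this (lt_irrefl 1)
    apply le_of_forall_pos_le_add
    intro ε hε
    set t : ℝ := if ω.1 0 ≤ ω.1 a then μ a else μ 0 with htdef
    have ht0 : 0 < t := by rw [htdef]; split <;> [exact (hrange a).1; exact (hrange 0).1]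
    have ht1 : t < 1 := by rw [htdef]; split <;> [exact (hrange a).2; exact (hrange 0).2]
    have htle : t ≤ μ 0 := by
      rw [htdef]; split <;> [exact (hbest a ha0).le; exact le_rfl]
    have htge : μ a ≤ t := by
      rw [htdef]; split <;> [exact le_rfl; exact (hbest a ha0).le]
    set δ : ℝ := min ε ((1 - t)/2) with hδdef
    have hδpos : 0 < δ := lt_min hε (by linarith)
    have hδε : δ ≤ ε := min_le_left _ _
    have hδ1 : t + δ ≤ 1 := by
      have := min_le_right ε ((1 - t)/2)
      linarith
    set l : Fin (K+2) → ℝ :=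
      fun b => if b = a then t + δ else if b = 0 then t else μ b with hl
    have hlmem : ∀ b, l b ∈ Set.Icc (0:ℝ) 1 := by
      intro b
      rw [hl]
      dsimp only
      split
      · exact ⟨by linarith, hδ1⟩
      · split
        · exact ⟨ht0.le, ht1.le⟩
        · exact ⟨(hrange b).1.le, (hrange b).2.le⟩
    have hl0 : l 0 = t := by rw [hl]; simp [Ne.symm ha0]
    have hla : l a = t + δ := by rw [hl]; simp
    have hlalt : ∃ b, b ≠ 0 ∧ l 0 < l b :=
      ⟨a, ha0, by rw [hl0, hla]; linarith⟩
    refine le_trans (ciInf_le (hbddB ω) ⟨l, hlmem, hlalt⟩) ?_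
    have hcost : ∑ b, ω.1 b * |μ b - l b|
        = ω.1 0 * (μ 0 - t) + ω.1 a * (t + δ - μ a) := by
      rw [← Finset.sum_subset (Finset.subset_univ ({0, a} : Finset (Fin (K+2)))) ?_]
      · rw [Finset.sum_pair (Ne.symm ha0), hl0, hla,
          abs_of_nonneg (by linarith : (0:ℝ) ≤ μ 0 - t),
          abs_of_nonpos (by linarith : μ a - (t + δ) ≤ 0)]
        ring_nf
      · intro b _ hb
        simp only [Finset.mem_insert, Finset.mem_singleton, not_or] at hb
        have : l b = μ b := by rw [hl]; simp [hb.1, hb.2]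
        rw [this, sub_self, abs_zero, mul_zero]
    rw [hcost]
    have haδ : ω.1 a * δ ≤ ε :=
      le_trans (mul_le_of_le_one_left hδpos.le (hωle a)) hδε
    rcases le_or_gt (ω.1 0) (ω.1 a) with h | h
    · have ht : t = μ a := if_pos h
      have hmin' : min (ω.1 0) (ω.1 a) = ω.1 0 := min_eq_left h
      rw [hmin'] at hmle
      rw [ht]
      nlinarith [hmle, haδ]
    · have ht : t = μ 0 := if_neg (not_le.2 h)
      have hmin' : min (ω.1 0) (ω.1 a) = ω.1 a := min_eq_right h.le
      rw [hmin'] at hmle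
      rw [ht]
      nlinarith [hmle, haδ]
  -- lower bound with optimal weights
  have hA : ∀ lam : TVAlt K, c ≤ ∑ b, ωs b * |μ b - lam.1 b| := by
    rintro ⟨l, hlmem, b, hb0, hblt⟩
    have hΔb := hΔpos b hb0
    have h1 : c * (μ 0 - μ b)⁻¹ ≤ ωs 0 := by
      have : (μ 0 - μ b)⁻¹ ≤ (μ 0 - μ 1)⁻¹ :=
        inv_anti₀ (hΔpos 1 h1ne) (sub_le_sub_left (hμb b hb0) _)
      rw [hωs]; simpa using mul_le_mul_of_nonneg_left this hcpos.le
    have h2 : ωs b = c * (μ 0 - μ b)⁻¹ := if_neg hb0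
    have habs : μ 0 - μ b ≤ |μ 0 - l 0| + |μ b - l b| := by
      have e1 := le_abs_self (μ 0 - l 0)
      have e2 := neg_abs_le (μ b - l b)
      linarith [hblt]
    have key : c ≤ ωs 0 * |μ 0 - l 0| + ωs b * |μ b - l b| := by
      have e0 : c = c * (μ 0 - μ b)⁻¹ * (μ 0 - μ b) := by
        field_simp
      calc c = c * (μ 0 - μ b)⁻¹ * (μ 0 - μ b) := e0
        _ ≤ c * (μ 0 - μ b)⁻¹ * (|μ 0 - l 0| + |μ b - l b|) :=
            mul_le_mul_of_nonneg_left habs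
              (mul_nonneg hcpos.le (inv_pos.2 hΔb).le)
        _ = c * (μ 0 - μ b)⁻¹ * |μ 0 - l 0| + c * (μ 0 - μ b)⁻¹ * |μ b - l b| := by
            ring
        _ ≤ ωs 0 * |μ 0 - l 0| + ωs b * |μ b - l b| := by
            rw [h2]
            exact add_le_add (mul_le_mul_of_nonneg_right h1 (abs_nonneg _)) le_rfl
    refine le_trans key ?_
    have hpair : ωs 0 * |μ 0 - l 0| + ωs b * |μ b - l b|
        = ∑ x ∈ ({0, b} : Finset (Fin (K+2))), ωs x * |μ x - l x| :=
      (Finset.sum_pair (f := fun x => ωs x * |μ x - l x|) (Ne.symm hb0)).symm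
    rw [hpair]
    exact Finset.sum_le_sum_of_subset_of_nonneg (Finset.subset_univ _)
      (fun i _ _ => mul_nonneg (hωnn i) (abs_nonneg _))
  -- bounded above
  have hbddA : BddAbove (Set.range fun ω : TVSimplex K =>
      ⨅ lam : TVAlt K, ∑ a, ω.1 a * |μ a - lam.1 a|) := by
    refine ⟨1, ?_⟩
    rintro x ⟨ω, rfl⟩
    obtain ⟨l0, hl0⟩ := (inferInstance : Nonempty (TVAlt K))
    refine le_trans (ciInf_le (hbddB ω) ⟨l0, hl0⟩) ?_
    calc ∑ a, ω.1 a * |μ a - l0 a| ≤ ∑ a, ω.1 a := by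
          refine Finset.sum_le_sum fun i _ => ?_
          have h1 := (hrange i).1
          have h2 := (hrange i).2
          have h3 := (hl0.1 i).1
          have h4 := (hl0.1 i).2
          have : |μ i - l0 i| ≤ 1 := abs_le.2 ⟨by linarith, by linarith⟩
          calc ω.1 i * |μ i - l0 i| ≤ ω.1 i * 1 :=
                mul_le_mul_of_nonneg_left this (ω.2.1 i)
            _ = ω.1 i := mul_one _
      _ = 1 := ω.2.2
  have hmain : tvCharInvBer μ = c := by
    unfold tvCharInvBer
    refine le_antisymm (ciSup_le hB) ?_
    exact le_ciSup_of_le hbddA ⟨ωs, hωnn, hωsum⟩ (le_ciInf hA)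
  rw [hmain, hc, inv_inv, hmin, hS]
  simp [one_div]
end

section
/- Optimization identity: for positive reals Δ_2, ..., Δ_K and the functions g_a(x) = min(1, x)·Δ_a, the supremum over (x_2,...,x_K) ∈ (ℝ_+)^{K-1} of min_{a≠1} g_a(x_a) / (1 + x_2 + ... + x_K) equals 1 / (1/Δ_min + Σ_{a=2}^K 1/Δ_a), with the supremum attained at x_a = Δ_min/Δ_a, where Δ_min = min_a Δ_a. -/
/-!
Put `m = min_a Δ_a` and `S = 1/m + Σ_a 1/Δ_a`. If `c = min_a min(1, x_a) Δ_a`, then `c ≤ m`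
(since `min(1, x_a) ≤ 1`) and `c / Δ_a ≤ x_a` for every `a`, so `c S ≤ 1 + Σ_a x_a`, i.e. the
ratio is at most `1 / S`. At `x_a = m / Δ_a` every clipped term equals `m`, and the ratio is
`m / (1 + m Σ_a 1/Δ_a) = 1 / S`.
-/

section ClippedRatio

variable {ι : Type*} [Fintype ι]

lemma div_le_of_le_min_one_mul {c x d : ℝ} (hd : 0 < d) (h : c ≤ min 1 x * d) : c / d ≤ x :=
  (div_le_iff₀ hd).2 (h.trans (mul_le_mul_of_nonneg_right (min_le_right 1 x) hd.le))

lemma iInf_pos_of_forall_pos [Nonempty ι] {Δ : ι → ℝ} (hΔ : ∀ a, 0 < Δ a) : 0 < ⨅ a, Δ a := by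
  obtain ⟨a, ha⟩ := exists_eq_ciInf_of_finite (f := Δ)
  exact ha ▸ hΔ a

lemma mul_le_one_add_sum_of_le_min_one_mul {Δ x : ι → ℝ} {c m : ℝ} (hΔ : ∀ a, 0 < Δ a)
    (hm : 0 < m) (hcm : c ≤ m) (hc : ∀ a, c ≤ min 1 (x a) * Δ a) :
    c * (1 / m + ∑ a, 1 / Δ a) ≤ 1 + ∑ a, x a := by
  have hcm' : c / m ≤ 1 := (div_le_one hm).2 hcm
  have hcx : ∑ a, c / Δ a ≤ ∑ a, x a :=
    Finset.sum_le_sum fun a _ => div_le_of_le_min_one_mul (hΔ a) (hc a)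
  calc c * (1 / m + ∑ a, 1 / Δ a) = c / m + ∑ a, c / Δ a := by
        simp only [mul_add, Finset.mul_sum, mul_one_div]
    _ ≤ 1 + ∑ a, x a := add_le_add hcm' hcx

variable [Nonempty ι] {Δ : ι → ℝ}

lemma iInf_min_one_mul_div_le {x : ι → ℝ} (hΔ : ∀ a, 0 < Δ a) (hx : ∀ a, 0 ≤ x a) :
    (⨅ a, min 1 (x a) * Δ a) / (1 + ∑ a, x a) ≤ 1 / (1 / (⨅ a, Δ a) + ∑ a, 1 / Δ a) := by
  set c := ⨅ a, min 1 (x a) * Δ a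
  have hm := iInf_pos_of_forall_pos hΔ
  have hc : ∀ a, c ≤ min 1 (x a) * Δ a := fun a => ciInf_le (Finite.bddBelow_range _) a
  have hc₀ : 0 ≤ c := le_ciInf fun a => mul_nonneg (le_min zero_le_one (hx a)) (hΔ a).le
  have hcm : c ≤ ⨅ a, Δ a := le_ciInf fun a =>
    (hc a).trans (mul_le_of_le_one_left (hΔ a).le (min_le_left 1 (x a)))
  have hS : 0 < 1 / (⨅ a, Δ a) + ∑ a, 1 / Δ a :=
    add_pos_of_pos_of_nonneg (one_div_pos.2 hm)
      (Finset.sum_nonneg fun a _ => (one_div_pos.2 (hΔ a)).le)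
  have hsum : 0 < 1 + ∑ a, x a :=
    add_pos_of_pos_of_nonneg one_pos (Finset.sum_nonneg fun a _ => hx a)
  rw [div_le_div_iff₀ hsum hS, one_mul]
  exact mul_le_one_add_sum_of_le_min_one_mul hΔ hm hcm hc

lemma iInf_min_one_mul_div_eq_at_iInf_div (hΔ : ∀ a, 0 < Δ a) :
    (⨅ a, min 1 ((⨅ b, Δ b) / Δ a) * Δ a) / (1 + ∑ a, (⨅ b, Δ b) / Δ a)
      = 1 / (1 / (⨅ a, Δ a) + ∑ a, 1 / Δ a) := by
  set m := ⨅ b, Δ b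
  have hm : 0 < m := iInf_pos_of_forall_pos hΔ
  have hterm : ∀ a, min 1 (m / Δ a) * Δ a = m := fun a => by
    rw [min_eq_right ((div_le_one (hΔ a)).2 (ciInf_le (Finite.bddBelow_range _) a)),
      div_mul_cancel₀ _ (hΔ a).ne']
  have hsum : ∑ a, m / Δ a = m * ∑ a, 1 / Δ a := by
    simp only [Finset.mul_sum, mul_one_div]
  have hT : 0 ≤ ∑ a, 1 / Δ a := Finset.sum_nonneg fun a _ => (one_div_pos.2 (hΔ a)).le
  have hden : 1 + m * ∑ a, 1 / Δ a ≠ 0 := by positivity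
  simp only [hterm, ciInf_const, hsum]
  field_simp

end ClippedRatio

/-- Optimization identity: for positive `Δ_a` and `g_a(x) = min(1,x)·Δ_a`, the value
`1 / (1/Δ_min + Σ_a 1/Δ_a)` is the greatest element of the set of values
`(min_a g_a(x_a)) / (1 + Σ_a x_a)` over `x ∈ (ℝ₊)^n` (hence the supremum, attained),
and it is attained at `x_a = Δ_min / Δ_a`. -/
theorem min_clipped_ratio_optimization {n : ℕ} [Nonempty (Fin n)]
    (Δ : Fin n → ℝ) (hΔ : ∀ a, 0 < Δ a) :
    IsGreatest
      {v : ℝ | ∃ x : Fin n → ℝ, (∀ a, 0 ≤ x a) ∧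
        v = (⨅ a, min 1 (x a) * Δ a) / (1 + ∑ a, x a)}
      (1 / (1 / (⨅ a, Δ a) + ∑ a, 1 / Δ a)) ∧
    (⨅ a, min 1 ((⨅ b, Δ b) / Δ a) * Δ a) / (1 + ∑ a, (⨅ b, Δ b) / Δ a)
      = 1 / (1 / (⨅ a, Δ a) + ∑ a, 1 / Δ a) := by
  have hopt := iInf_min_one_mul_div_eq_at_iInf_div hΔ
  have hx_opt : ∀ a, 0 ≤ (⨅ b, Δ b) / Δ a := fun a =>
    (div_pos (iInf_pos_of_forall_pos hΔ) (hΔ a)).le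
  refine ⟨⟨⟨_, hx_opt, hopt.symm⟩, ?_⟩, hopt⟩
  rintro v ⟨x, hx, rfl⟩
  exact iInf_min_one_mul_div_le hΔ hx
end

section
/- If M is ε-pure DP and P_1 = ⊗_{i=1}^n p_{1,i}, P_2 = ⊗_{i=1}^n p_{2,i} are product distributions over X^n, then the KL divergence between the output marginals satisfies KL(M_1, M_2) ≤ ε · Σ_{i=1}^n TV(p_{1,i}, p_{2,i}). -/
open MeasureTheory ENNReal
open scoped Classical BigOperators

/-- Hamming distance between two data sets in `X^n`. -/
noncomputable def dHam {X : Type*} {n : ℕ} (D D' : Fin n → X) : ℕ :=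
  (Finset.univ.filter fun i => D i ≠ D' i).card

/-- KL divergence between two measures, as the expected log Radon–Nikodym derivative. -/
noncomputable def klDiv {Ω : Type*} [MeasurableSpace Ω] (μ ν : Measure Ω) : ℝ :=
  ∫ x, Real.log ((μ.rnDeriv ν x).toReal) ∂μ

/-- Total variation distance `sup_A (μ(A) - ν(A))`. -/
noncomputable def tvDist {Ω : Type*} [MeasurableSpace Ω] (μ ν : Measure Ω) : ℝ :=
  ⨆ s : Set Ω, ((μ s).toReal - (ν s).toReal)

/-!
Couple each pair `p1 i`, `p2 i` maximally, so that the two coordinates disagree with probability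
`TV(p1 i, p2 i)`. Under the product coupling `κ` both output marginals are mixtures over `κ`,
of `M D` and of `M D'` respectively, where `D` and `D'` differ in at most `N` coordinates, `N` being
the number of disagreements; by group privacy `M D ≤ e^{ε N} M D'`. Integrating the elementary
inequality `g ≤ c + e^{g - c} - 1` for `g = log (dM₁/dM₂)` first against `M D` and then against `κ`
gives `KL(M₁, M₂) ≤ ε 𝔼[N] + ∫ e^g dM₂ - 1 = ε ∑ᵢ TV(p1 i, p2 i)`.
-/

open ProbabilityTheory

section GroupPrivacy

variable {X O : Type*} [MeasurableSpace O] {n : ℕ}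

lemma dHam_eq_zero_iff {D D' : Fin n → X} : dHam D D' = 0 ↔ D = D' := by
  simp [dHam, Finset.filter_eq_empty_iff, funext_iff]

lemma dHam_le (D D' : Fin n → X) : dHam D D' ≤ n :=
  (Finset.card_filter_le _ _).trans_eq (Finset.card_fin n)

lemma dHam_update_self {D : Fin n → X} {i : Fin n} {a : X} (h : D i ≠ a) :
    dHam D (Function.update D i a) = 1 := by
  rw [dHam, Finset.card_eq_one]
  refine ⟨i, Finset.ext fun j => ?_⟩
  by_cases hj : j = i
  · subst hj
    simpa using h
  · simp [hj]

lemma dHam_update_add_one {D D' : Fin n → X} {i : Fin n} (h : D i ≠ D' i) :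
    dHam (Function.update D i (D' i)) D' + 1 = dHam D D' := by
  have hfilter : (Finset.univ.filter fun j => Function.update D i (D' i) j ≠ D' j) =
      (Finset.univ.filter fun j => D j ≠ D' j).erase i := by
    ext j
    by_cases hj : j = i
    · subst hj
      simp
    · simp [hj]
  rw [dHam, dHam, hfilter, Finset.card_erase_add_one (by simpa using h)]

lemma le_exp_mul_dHam_smul {ε : ℝ} {M : (Fin n → X) → Measure O}
    (hDP : ∀ D D', dHam D D' = 1 → M D ≤ ENNReal.ofReal (Real.exp ε) • M D')
    (D D' : Fin n → X) : M D ≤ ENNReal.ofReal (Real.exp (ε * dHam D D')) • M D' := by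
  induction hk : dHam D D' generalizing D with
  | zero => simp [dHam_eq_zero_iff.mp hk]
  | succ k ih =>
    obtain ⟨i, hi⟩ : ∃ i, D i ≠ D' i := by
      by_contra! h
      simp [dHam_eq_zero_iff.mpr (funext h)] at hk
    have hrest := ih (Function.update D i (D' i)) (by have := dHam_update_add_one hi; omega)
    calc M D ≤ ENNReal.ofReal (Real.exp ε) • M (Function.update D i (D' i)) :=
          hDP D _ (dHam_update_self hi)
      _ ≤ ENNReal.ofReal (Real.exp ε) • ENNReal.ofReal (Real.exp (ε * k)) • M D' := by gcongr
      _ = ENNReal.ofReal (Real.exp (ε * ↑(k + 1))) • M D' := by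
        rw [smul_smul, ← ENNReal.ofReal_mul (Real.exp_nonneg _), ← Real.exp_add]
        push_cast
        ring_nf

lemma le_exp_mul_smul_of_dHam_le {ε t : ℝ} (hε : 0 ≤ ε) {M : (Fin n → X) → Measure O}
    (hDP : ∀ D D', dHam D D' = 1 → M D ≤ ENNReal.ofReal (Real.exp ε) • M D')
    {D D' : Fin n → X} (ht : (dHam D D' : ℝ) ≤ t) :
    M D ≤ ENNReal.ofReal (Real.exp (ε * t)) • M D' :=
  (le_exp_mul_dHam_smul hDP D D').trans (by gcongr)

end GroupPrivacy

section MaximalCoupling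

variable {X : Type*} [MeasurableSpace X]

lemma exists_eq_add_eq_add (p₁ p₂ : Measure X) [IsFiniteMeasure p₁] [IsFiniteMeasure p₂] :
    ∃ (m e₁ e₂ : Measure X) (s : Set X), IsFiniteMeasure m ∧ IsFiniteMeasure e₁ ∧
      IsFiniteMeasure e₂ ∧ p₁ = m + e₁ ∧ p₂ = m + e₂ ∧ e₁ sᶜ = 0 ∧ e₂ s = 0 := by
  obtain ⟨s, hs, h₁, h₂⟩ := hahn_decomposition p₁ p₂
  have hle₁ : p₂.restrict s ≤ p₁.restrict s := Measure.le_iff.mpr fun t ht => by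
    simp only [Measure.restrict_apply ht]
    exact h₁ _ (ht.inter hs) Set.inter_subset_right
  have hle₂ : p₁.restrict sᶜ ≤ p₂.restrict sᶜ := Measure.le_iff.mpr fun t ht => by
    simp only [Measure.restrict_apply ht]
    exact h₂ _ (ht.inter hs.compl) Set.inter_subset_right
  refine ⟨p₂.restrict s + p₁.restrict sᶜ, p₁.restrict s - p₂.restrict s,
    p₂.restrict sᶜ - p₁.restrict sᶜ, s, inferInstance,
    isFiniteMeasure_of_le _ Measure.sub_le, isFiniteMeasure_of_le _ Measure.sub_le, ?_, ?_, ?_, ?_⟩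
  · rw [add_right_comm, add_comm (p₂.restrict s), Measure.sub_add_cancel_of_le hle₁,
      Measure.restrict_add_restrict_compl hs]
  · rw [add_assoc, add_comm (p₁.restrict sᶜ), Measure.sub_add_cancel_of_le hle₂,
      Measure.restrict_add_restrict_compl hs]
  · exact nonpos_iff_eq_zero.mp <| (Measure.le_iff'.mp Measure.sub_le _).trans_eq <| by
      simp [Measure.restrict_apply' hs]
  · exact nonpos_iff_eq_zero.mp <| (Measure.le_iff'.mp Measure.sub_le _).trans_eq <| by
      simp [Measure.restrict_apply' hs.compl]

lemma tvDist_eq_of_eq_add {p₁ p₂ m e₁ e₂ : Measure X} [IsFiniteMeasure m] [IsFiniteMeasure e₁]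
    [IsFiniteMeasure e₂] (h₁ : p₁ = m + e₁) (h₂ : p₂ = m + e₂) {s : Set X}
    (he₁ : e₁ sᶜ = 0) (he₂ : e₂ s = 0) :
    tvDist p₁ p₂ = e₁.real Set.univ := by
  have hdiff : ∀ t, (p₁ t).toReal - (p₂ t).toReal = e₁.real t - e₂.real t := fun t => by
    simp only [h₁, h₂, Measure.coe_add, Pi.add_apply, measureReal_def]
    rw [ENNReal.toReal_add (measure_ne_top _ _) (measure_ne_top _ _),
      ENNReal.toReal_add (measure_ne_top _ _) (measure_ne_top _ _)]
    ring
  have hbound : ∀ t, (p₁ t).toReal - (p₂ t).toReal ≤ e₁.real Set.univ := fun t => by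
    rw [hdiff]
    linarith [measureReal_nonneg (μ := e₂) (s := t), measureReal_mono (μ := e₁) (Set.subset_univ t)]
  refine le_antisymm (ciSup_le hbound) (le_ciSup_of_le ⟨_, Set.forall_mem_range.mpr hbound⟩ s ?_)
  have hs : e₁.real Set.univ ≤ e₁.real s := by
    calc e₁.real Set.univ ≤ e₁.real s + e₁.real sᶜ := by
          simpa using measureReal_union_le (μ := e₁) s sᶜ
      _ = e₁.real s := by simp [measureReal_def, he₁]
  rw [hdiff, measureReal_def e₂, he₂]
  simpa using hs

lemma measure_univ_inv_smul_smul (e : Measure X) [IsFiniteMeasure e] :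
    (e Set.univ)⁻¹ • e Set.univ • e = e := by
  rcases eq_or_ne e 0 with rfl | he
  · simp
  · rw [smul_smul, ENNReal.inv_mul_cancel (by simpa using he) (measure_ne_top _ _), one_smul]

/-- `Sum.inl x` stands for the diagonal pair `(x, x)`: the common part of `p₁` and `p₂` is put on
the diagonal and the normalised product of the two excess parts off it. -/
theorem exists_coupling_tvDist (p₁ p₂ : Measure X) [IsProbabilityMeasure p₁]
    [IsProbabilityMeasure p₂] :
    ∃ ω : Measure (X ⊕ X × X), IsProbabilityMeasure ω ∧
      ω.map (Sum.elim id Prod.fst) = p₁ ∧ ω.map (Sum.elim id Prod.snd) = p₂ ∧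
      ω.real (Set.range Sum.inr) = tvDist p₁ p₂ := by
  obtain ⟨m, e₁, e₂, s, _, _, _, h₁, h₂, he₁, he₂⟩ := exists_eq_add_eq_add p₁ p₂
  have hT : e₂ Set.univ = e₁ Set.univ := by
    have h : m Set.univ + e₂ Set.univ = m Set.univ + e₁ Set.univ := by
      rw [← Measure.add_apply, ← Measure.add_apply, ← h₁, ← h₂, measure_univ, measure_univ]
    exact (ENNReal.add_right_inj (measure_ne_top _ _)).mp h
  set ω := m.map Sum.inl + (e₁ Set.univ)⁻¹ • (e₁.prod e₂).map (Sum.inr : X × X → X ⊕ X × X)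
  have hπ₁ : Measurable (Sum.elim (id : X → X) (Prod.fst : X × X → X)) := by fun_prop
  have hπ₂ : Measurable (Sum.elim (id : X → X) (Prod.snd : X × X → X)) := by fun_prop
  have hω₁ : ω.map (Sum.elim id Prod.fst) = p₁ := by
    rw [Measure.map_add _ _ hπ₁, Measure.map_smul, Measure.map_map hπ₁ measurable_inl,
      Measure.map_map hπ₁ measurable_inr]
    simp [h₁, hT, measure_univ_inv_smul_smul]
  have hω₂ : ω.map (Sum.elim id Prod.snd) = p₂ := by
    rw [Measure.map_add _ _ hπ₂, Measure.map_smul, Measure.map_map hπ₂ measurable_inl,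
      Measure.map_map hπ₂ measurable_inr]
    simp [h₂, ← hT, measure_univ_inv_smul_smul]
  have hωprob : IsProbabilityMeasure ω := by
    constructor
    simpa [Measure.map_apply hπ₁ .univ] using congrArg (· Set.univ) hω₁
  refine ⟨ω, hωprob, hω₁, hω₂, ?_⟩
  rw [tvDist_eq_of_eq_add h₁ h₂ he₁ he₂]
  simp [ω, measureReal_def, Measure.map_apply measurable_inl measurableSet_range_inr,
    Measure.map_apply measurable_inr measurableSet_range_inr]
  rw [← Set.univ_prod_univ, Measure.prod_prod, hT, ENNReal.toReal_mul]
  by_cases h0 : (e₁ Set.univ).toReal = 0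
  · simp [h0]
  · field_simp

end MaximalCoupling

section ProductCoupling

variable {ι X : Type*} [Fintype ι] [MeasurableSpace X]

noncomputable def offDiagCount (h : ι → X ⊕ X × X) : ℝ :=
  ∑ i, (Set.range Sum.inr).indicator 1 (h i)

omit [Fintype ι] in
lemma integrable_indicator_range_inr_apply (κ : Measure (ι → X ⊕ X × X)) [IsFiniteMeasure κ]
    (i : ι) : Integrable (fun h => (Set.range Sum.inr).indicator (1 : X ⊕ X × X → ℝ) (h i)) κ := by
  refine Integrable.of_bound ?_ 1 (ae_of_all _ fun h => ?_)
  · exact ((measurable_const.indicator measurableSet_range_inr).comp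
      (measurable_pi_apply i)).aestronglyMeasurable
  · by_cases hi : h i ∈ Set.range Sum.inr <;> simp [hi]

lemma integrable_offDiagCount (κ : Measure (ι → X ⊕ X × X)) [IsFiniteMeasure κ] :
    Integrable offDiagCount κ :=
  integrable_finsetSum _ fun i _ => integrable_indicator_range_inr_apply κ i

lemma integral_offDiagCount (ω : ι → Measure (X ⊕ X × X)) [∀ i, IsProbabilityMeasure (ω i)] :
    ∫ h, offDiagCount h ∂Measure.pi ω = ∑ i, (ω i).real (Set.range Sum.inr) := by
  unfold offDiagCount
  rw [integral_finsetSum _ fun i _ => integrable_indicator_range_inr_apply _ i]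
  refine Finset.sum_congr rfl fun i _ => ?_
  rw [← integral_indicator_one measurableSet_range_inr, ← (measurePreserving_eval ω i).map_eq,
    integral_map (measurable_pi_apply i).aemeasurable
      (measurable_const.indicator measurableSet_range_inr).aestronglyMeasurable]

theorem exists_pi_coupling (p₁ p₂ : ι → Measure X) [∀ i, IsProbabilityMeasure (p₁ i)]
    [∀ i, IsProbabilityMeasure (p₂ i)] :
    ∃ κ : Measure (ι → X ⊕ X × X), IsProbabilityMeasure κ ∧
      κ.map (fun h i => Sum.elim id Prod.fst (h i)) = Measure.pi p₁ ∧
      κ.map (fun h i => Sum.elim id Prod.snd (h i)) = Measure.pi p₂ ∧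
      ∫ h, offDiagCount h ∂κ = ∑ i, tvDist (p₁ i) (p₂ i) := by
  choose ω _ hω₁ hω₂ hωtv using fun i => exists_coupling_tvDist (p₁ i) (p₂ i)
  refine ⟨Measure.pi ω, inferInstance, ?_, ?_, ?_⟩
  · rw [Measure.pi_map_pi fun i => (measurable_id.sumElim measurable_fst).aemeasurable]
    simp_rw [hω₁]
  · rw [Measure.pi_map_pi fun i => (measurable_id.sumElim measurable_snd).aemeasurable]
    simp_rw [hω₂]
  · simp_rw [integral_offDiagCount, hωtv]

omit [MeasurableSpace X] in
lemma dHam_le_offDiagCount {n : ℕ} (h : Fin n → X ⊕ X × X) :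
    (dHam (fun i => Sum.elim id Prod.fst (h i)) (fun i => Sum.elim id Prod.snd (h i)) : ℝ) ≤
      offDiagCount h := by
  rw [dHam, Finset.natCast_card_filter]
  refine Finset.sum_le_sum fun i _ => ?_
  rcases h i with x | ⟨x, y⟩
  · simp
  · by_cases hxy : x = y <;> simp [hxy]

end ProductCoupling

section KullbackLeibler

variable {H O : Type*} [MeasurableSpace H] [MeasurableSpace O]

lemma ae_rnDeriv_le_of_le_smul {μ ν : Measure O} [SigmaFinite ν] {r : ℝ≥0∞} (h : μ ≤ r • ν) :
    ∀ᵐ x ∂ν, μ.rnDeriv ν x ≤ r := by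
  refine ae_le_of_forall_setLIntegral_le_of_sigmaFinite (μ.measurable_rnDeriv ν) fun s _ _ => ?_
  rw [setLIntegral_const, mul_comm]
  exact (Measure.setLIntegral_rnDeriv_le s).trans ((h s).trans_eq (mul_comm _ _))

lemma ae_inv_le_rnDeriv_of_le_smul {μ ν : Measure O} [SigmaFinite μ] [SigmaFinite ν] {r : ℝ≥0∞}
    (h : ν ≤ r • μ) : ∀ᵐ x ∂ν, r⁻¹ ≤ μ.rnDeriv ν x := by
  have hνμ : ν ≪ μ := Measure.absolutelyContinuous_of_le_smul h
  filter_upwards [hνμ.ae_le (ae_rnDeriv_le_of_le_smul h), Measure.inv_rnDeriv hνμ] with x hx hinv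
  rw [← hinv]
  exact ENNReal.inv_le_inv.mpr hx

lemma comp_le_smul_comp {K₁ K₂ : Kernel H O} {r : ℝ≥0∞} (hK : ∀ a b, K₁ a ≤ r • K₂ b)
    (ρ₁ ρ₂ : Measure H) [IsProbabilityMeasure ρ₁] [IsProbabilityMeasure ρ₂] :
    K₁ ∘ₘ ρ₁ ≤ r • K₂ ∘ₘ ρ₂ := by
  refine Measure.le_iff.mpr fun s hs => ?_
  rw [Measure.smul_apply, smul_eq_mul, Measure.bind_apply hs K₁.aemeasurable,
    Measure.bind_apply hs K₂.aemeasurable, ← lintegral_const_mul _ (K₂.measurable_coe hs)]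
  calc ∫⁻ a, K₁ a s ∂ρ₁ ≤ ∫⁻ _, ∫⁻ b, r * K₂ b s ∂ρ₂ ∂ρ₁ := by
        refine lintegral_mono fun a => ?_
        calc K₁ a s = ∫⁻ _, K₁ a s ∂ρ₂ := by simp
          _ ≤ ∫⁻ b, r * K₂ b s ∂ρ₂ := lintegral_mono fun b => hK a b s
    _ = ∫⁻ b, r * K₂ b s ∂ρ₂ := by simp

lemma comp_map_eq_comap_comp {G : Type*} [MeasurableSpace G] (K : Kernel H O) (κ : Measure G)
    {Φ : G → H} (hΦ : Measurable Φ) : K ∘ₘ κ.map Φ = K.comap Φ hΦ ∘ₘ κ := by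
  rw [← Measure.deterministic_comp_eq_map hΦ, Measure.comp_assoc,
    Kernel.comp_deterministic_eq_comap]

lemma integral_comp_eq_integral_integral {ρ : Measure H} {K : Kernel H O} {f : O → ℝ}
    (hf : Integrable f (K ∘ₘ ρ)) : ∫ x, f x ∂(K ∘ₘ ρ) = ∫ h, ∫ x, f x ∂K h ∂ρ := by
  rw [Measure.comp_eq_comp_const_apply] at hf ⊢
  simpa using Kernel.integral_comp hf

lemma MeasureTheory.Integrable.integral_comp_measure {ρ : Measure H} {K : Kernel H O} {f : O → ℝ}
    (hf : Integrable f (K ∘ₘ ρ)) : Integrable (fun h => ∫ x, f x ∂K h) ρ := by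
  rw [Measure.comp_eq_comp_const_apply] at hf
  simpa using hf.integral_comp

lemma integral_le_add_integral_exp_sub_one {m₁ m₂ : Measure O} [IsProbabilityMeasure m₁] {c : ℝ}
    (h : m₁ ≤ ENNReal.ofReal (Real.exp c) • m₂) {g : O → ℝ} (hg₁ : Integrable g m₁)
    (hg₂ : Integrable (fun x => Real.exp (g x)) m₂) :
    ∫ x, g x ∂m₁ ≤ c + ∫ x, Real.exp (g x) ∂m₂ - 1 := by
  have hg₂' : Integrable (fun x => Real.exp (g x)) (ENNReal.ofReal (Real.exp c) • m₂) :=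
    hg₂.smul_measure ENNReal.ofReal_ne_top
  have hexp₁ : Integrable (fun x => Real.exp (g x)) m₁ := hg₂'.mono_measure h
  -- `g - c ≤ exp (g - c) - 1`
  have hpt : ∀ x, g x ≤ c + Real.exp (-c) * Real.exp (g x) - 1 := fun x => by
    have := Real.add_one_le_exp (g x - c)
    rw [sub_eq_neg_add, Real.exp_add] at this
    linarith
  have hmono : ∫ x, Real.exp (g x) ∂m₁ ≤ Real.exp c * ∫ x, Real.exp (g x) ∂m₂ := by
    have := integral_mono_measure h (ae_of_all _ fun x => (Real.exp_pos (g x)).le) hg₂'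
    rwa [integral_smul_measure, ENNReal.toReal_ofReal (Real.exp_nonneg c), smul_eq_mul] at this
  have hrhs : Integrable (fun x => c + Real.exp (-c) * Real.exp (g x)) m₁ :=
    (integrable_const c).add (hexp₁.const_mul _)
  calc ∫ x, g x ∂m₁ ≤ ∫ x, (c + Real.exp (-c) * Real.exp (g x) - 1) ∂m₁ :=
        integral_mono hg₁ (hrhs.sub (integrable_const 1)) hpt
    _ = c + Real.exp (-c) * ∫ x, Real.exp (g x) ∂m₁ - 1 := by
        rw [integral_sub hrhs (integrable_const 1),
          integral_add (integrable_const c) (hexp₁.const_mul _), integral_const_mul]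
        simp
    _ ≤ c + Real.exp (-c) * (Real.exp c * ∫ x, Real.exp (g x) ∂m₂) - 1 := by gcongr
    _ = c + ∫ x, Real.exp (g x) ∂m₂ - 1 := by
        rw [← mul_assoc, ← Real.exp_add, neg_add_cancel, Real.exp_zero, one_mul]

theorem integral_comp_le_integral_add_integral_exp (ρ : Measure H) [IsProbabilityMeasure ρ]
    (K₁ K₂ : Kernel H O) [IsMarkovKernel K₁] {c : H → ℝ} (hc : Integrable c ρ)
    (hK : ∀ h, K₁ h ≤ ENNReal.ofReal (Real.exp (c h)) • K₂ h) {g : O → ℝ}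
    (hg₁ : Integrable g (K₁ ∘ₘ ρ)) (hg₂ : Integrable (fun x => Real.exp (g x)) (K₂ ∘ₘ ρ)) :
    ∫ x, g x ∂(K₁ ∘ₘ ρ) ≤ ∫ h, c h ∂ρ + ∫ x, Real.exp (g x) ∂(K₂ ∘ₘ ρ) - 1 := by
  have hrhs : Integrable (fun h => c h + ∫ x, Real.exp (g x) ∂K₂ h) ρ :=
    hc.add hg₂.integral_comp_measure
  rw [integral_comp_eq_integral_integral hg₁, integral_comp_eq_integral_integral hg₂,
    ← integral_add hc hg₂.integral_comp_measure]
  calc ∫ h, ∫ x, g x ∂K₁ h ∂ρ ≤ ∫ h, (c h + ∫ x, Real.exp (g x) ∂K₂ h - 1) ∂ρ := by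
        refine integral_mono_ae hg₁.integral_comp_measure (hrhs.sub (integrable_const 1)) ?_
        filter_upwards [((Measure.integrable_comp_iff hg₁.1).mp hg₁).1,
          ((Measure.integrable_comp_iff hg₂.1).mp hg₂).1] with h h₁ h₂
        exact integral_le_add_integral_exp_sub_one (hK h) h₁ h₂
    _ = ∫ h, (c h + ∫ x, Real.exp (g x) ∂K₂ h) ∂ρ - 1 := by
        rw [integral_sub hrhs (integrable_const 1)]
        simp

theorem klDiv_le_of_forall_integral_le {P Q : Measure O} [IsProbabilityMeasure P]
    [IsProbabilityMeasure Q] {L a : ℝ} (hPQ : P ≤ ENNReal.ofReal (Real.exp L) • Q)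
    (hQP : Q ≤ ENNReal.ofReal (Real.exp L) • P)
    (h : ∀ g : O → ℝ, Integrable g P → Integrable (fun x => Real.exp (g x)) Q →
      ∫ x, g x ∂P ≤ a + ∫ x, Real.exp (g x) ∂Q - 1) :
    klDiv P Q ≤ a := by
  have hPQac : P ≪ Q := Measure.absolutelyContinuous_of_le_smul hPQ
  have hbounds : ∀ᵐ x ∂Q, Real.exp (-L) ≤ (P.rnDeriv Q x).toReal ∧
      (P.rnDeriv Q x).toReal ≤ Real.exp L := by
    filter_upwards [ae_rnDeriv_le_of_le_smul hPQ, ae_inv_le_rnDeriv_of_le_smul hQP]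
      with x hle hge
    have hne : P.rnDeriv Q x ≠ ∞ := ne_top_of_le_ne_top ENNReal.ofReal_ne_top hle
    refine ⟨?_, ENNReal.toReal_le_of_le_ofReal (Real.exp_nonneg L) hle⟩
    rw [Real.exp_neg, ← ENNReal.toReal_ofReal (Real.exp_nonneg L), ← ENNReal.toReal_inv]
    exact ENNReal.toReal_mono hne hge
  have hlog : ∀ᵐ x ∂Q, ‖Real.log (P.rnDeriv Q x).toReal‖ ≤ L := by
    filter_upwards [hbounds] with x ⟨hge, hle⟩
    rw [Real.norm_eq_abs, abs_le]
    constructor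
    · simpa using Real.log_le_log (Real.exp_pos _) hge
    · simpa using Real.log_le_log ((Real.exp_pos (-L)).trans_le hge) hle
  have hexp : (fun x => Real.exp (Real.log (P.rnDeriv Q x).toReal)) =ᵐ[Q]
      fun x => (P.rnDeriv Q x).toReal := by
    filter_upwards [hbounds] with x hx
    exact Real.exp_log ((Real.exp_pos (-L)).trans_le hx.1)
  have hmeas : Measurable fun x => Real.log (P.rnDeriv Q x).toReal :=
    (Measure.measurable_rnDeriv P Q).ennreal_toReal.log
  have key := h _ (Integrable.of_bound hmeas.aestronglyMeasurable L (hPQac.ae_le hlog))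
    (Measure.integrable_toReal_rnDeriv.congr hexp.symm)
  rw [integral_congr_ae hexp, Measure.integral_toReal_rnDeriv hPQac, probReal_univ] at key
  simpa [klDiv] using key

end KullbackLeibler

/-- KL decomposition for product distributions: if `M` is `ε`-pure DP and
`P₁ = ⊗ᵢ p₁ᵢ`, `P₂ = ⊗ᵢ p₂ᵢ` are product distributions over `X^n`, then the KL
divergence between the output marginals is at most `ε · Σᵢ TV(p₁ᵢ, p₂ᵢ)`. -/
theorem kl_marginals_product_le {X O : Type*} [MeasurableSpace X] [MeasurableSpace O]
    {n : ℕ} (ε : ℝ) (hε : 0 ≤ ε)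
    (M : (Fin n → X) → Measure O) (hM : Measurable M)
    (hMprob : ∀ D, IsProbabilityMeasure (M D))
    (hDP : ∀ (D D' : Fin n → X) (A : Set O), dHam D D' = 1 →
      M D A ≤ ENNReal.ofReal (Real.exp ε) * M D' A)
    (p1 p2 : Fin n → Measure X)
    [∀ i, IsProbabilityMeasure (p1 i)] [∀ i, IsProbabilityMeasure (p2 i)] :
    klDiv ((Measure.pi p1).bind M) ((Measure.pi p2).bind M) ≤
      ε * ∑ i, tvDist (p1 i) (p2 i) := by
  obtain ⟨κ, _, hmap₁, hmap₂, hcount⟩ := exists_pi_coupling p1 p2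
  let K : Kernel (Fin n → X) O := ⟨M, hM⟩
  have : IsMarkovKernel K := ⟨hMprob⟩
  have hDP' : ∀ D D', dHam D D' = 1 → K D ≤ ENNReal.ofReal (Real.exp ε) • K D' :=
    fun D D' h => Measure.le_iff'.mpr fun A => hDP D D' A h
  have hbound : ∀ D D', K D ≤ ENNReal.ofReal (Real.exp (ε * n)) • K D' := fun D D' =>
    le_exp_mul_smul_of_dHam_le hε hDP' (by exact_mod_cast dHam_le D D')
  change klDiv (K ∘ₘ Measure.pi p1) (K ∘ₘ Measure.pi p2) ≤ _
  rw [← hmap₁, ← hmap₂, comp_map_eq_comap_comp K κ (by fun_prop),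
    comp_map_eq_comap_comp K κ (by fun_prop), ← hcount, ← integral_const_mul]
  refine klDiv_le_of_forall_integral_le (L := ε * n) (comp_le_smul_comp ?_ κ κ)
    (comp_le_smul_comp ?_ κ κ) fun g hg₁ hg₂ => ?_
  · exact fun _ _ => hbound _ _
  · exact fun _ _ => hbound _ _
  · exact integral_comp_le_integral_add_integral_exp κ _ _
      ((integrable_offDiagCount κ).const_mul ε)
      (fun h => le_exp_mul_smul_of_dHam_le hε hDP' (dHam_le_offDiagCount h)) hg₁ hg₂
end

section
/- For δ ∈ (0,1), the binary relative entropy satisfies kl(1-δ, δ) ≥ log(1/(2.4δ)), where kl(x,y) = x log(x/y) + (1-x) log((1-x)/(1-y)). -/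
/-- Binary relative entropy `kl(x,y) = x log(x/y) + (1-x) log((1-x)/(1-y))`. -/
noncomputable def klBer (x y : ℝ) : ℝ :=
  x * Real.log (x / y) + (1 - x) * Real.log ((1 - x) / (1 - y))

set_option maxHeartbeats 1000000 in
/-- For `δ ∈ (0,1)`, `kl(1-δ, δ) ≥ log(1/(2.4 δ))`. -/
theorem klBer_ge_log_one_div (δ : ℝ) (hδ : δ ∈ Set.Ioo (0 : ℝ) 1) :
    Real.log (1 / (2.4 * δ)) ≤ klBer (1 - δ) δ := by
  obtain ⟨h0, h1⟩ := hδ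
  have hd1 : (0:ℝ) < 1 - δ := by linarith
  have hkl : klBer (1-δ) δ = (1-2*δ) * (Real.log (1-δ) - Real.log δ) := by
    unfold klBer
    rw [show (1:ℝ) - (1-δ) = δ by ring,
      Real.log_div (ne_of_gt hd1) (ne_of_gt h0),
      Real.log_div (ne_of_gt h0) (ne_of_gt hd1)]
    ring
  have hlog24 : Real.log (2.4:ℝ) = 2*Real.log 2 + Real.log 3 - Real.log 5 := by
    rw [show (2.4:ℝ) = 2^2*3/5 by norm_num,
      Real.log_div (by norm_num) (by norm_num),
      Real.log_mul (by norm_num) (by norm_num), Real.log_pow]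
    push_cast; ring
  have hlhs : Real.log (1/(2.4*δ))
      = -(2*Real.log 2 + Real.log 3 - Real.log 5) - Real.log δ := by
    rw [one_div, Real.log_inv, Real.log_mul (by norm_num) (ne_of_gt h0), hlog24]
    ring
  -- numeric bounds on log 2, log 3, log 5
  have hl2a : (0.6931471803:ℝ) < Real.log 2 := Real.log_two_gt_d9
  have hl2b : Real.log 2 < (0.6931471808:ℝ) := Real.log_two_lt_d9
  have h3lo : (84:ℝ) * Real.log 2 < 53 * Real.log 3 := by
    have h : Real.log ((2:ℝ)^84) < Real.log ((3:ℝ)^53) :=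
      Real.log_lt_log (by positivity) (by norm_num)
    rw [Real.log_pow, Real.log_pow] at h
    push_cast at h; linarith
  have h3hi : (41:ℝ) * Real.log 3 < 65 * Real.log 2 := by
    have h : Real.log ((3:ℝ)^41) < Real.log ((2:ℝ)^65) :=
      Real.log_lt_log (by positivity) (by norm_num)
    rw [Real.log_pow, Real.log_pow] at h
    push_cast at h; linarith
  have h5lo : (202:ℝ) * Real.log 2 < 87 * Real.log 5 := by
    have h : Real.log ((2:ℝ)^202) < Real.log ((5:ℝ)^87) :=
      Real.log_lt_log (by positivity) (by norm_num)
    rw [Real.log_pow, Real.log_pow] at h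
    push_cast at h; linarith
  have h5hi : (59:ℝ) * Real.log 5 < 137 * Real.log 2 := by
    have h : Real.log ((5:ℝ)^59) < Real.log ((2:ℝ)^137) :=
      Real.log_lt_log (by positivity) (by norm_num)
    rw [Real.log_pow, Real.log_pow] at h
    push_cast at h; linarith
  have hl3a : (1.09857:ℝ) < Real.log 3 := by linarith
  have hl3b : Real.log 3 < (1.09890:ℝ) := by linarith
  have hl5a : (1.60937:ℝ) < Real.log 5 := by linarith
  have hl5b : Real.log 5 < (1.60952:ℝ) := by linarith
  rw [hkl, hlhs]
  rcases le_or_gt δ (5/12) with hle | hgt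
  · -- main case: tangent bound at 1/3
    have h12 : (0:ℝ) < 1 - 2*δ := by linarith
    -- log δ ≥ -log 3 + 1 - 1/(3δ)
    have ht1 : -Real.log 3 + 1 - 1/(3*δ) ≤ Real.log δ := by
      have h := Real.log_le_sub_one_of_pos (show (0:ℝ) < 1/(3*δ) by positivity)
      rw [one_div, Real.log_inv, Real.log_mul (by norm_num) (ne_of_gt h0)] at h
      have hinv : (3*δ)⁻¹ = 1/(3*δ) := (one_div _).symm
      rw [hinv] at h
      linarith
    -- log (1-δ) ≥ log 2 - log 3 + 1 - (2/3)/(1-δ)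
    have ht2 : Real.log 2 - Real.log 3 + 1 - (2/3)/(1-δ) ≤ Real.log (1-δ) := by
      have h := Real.log_le_sub_one_of_pos (show (0:ℝ) < (2/3)/(1-δ) by positivity)
      rw [Real.log_div (by norm_num) (ne_of_gt hd1),
        Real.log_div (by norm_num) (by norm_num)] at h
      linarith
    have hM : (1-2*δ) * (Real.log 2 - Real.log 3 + 1 - (2/3)/(1-δ))
        ≤ (1-2*δ) * Real.log (1-δ) :=
      mul_le_mul_of_nonneg_left ht2 h12.le
    have hL : (2*δ) * (-Real.log 3 + 1 - 1/(3*δ)) ≤ (2*δ) * Real.log δ :=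
      mul_le_mul_of_nonneg_left ht1 (by linarith)
    have h2 : (2*δ) * (-Real.log 3 + 1 - 1/(3*δ)) = 2*δ*(1-Real.log 3) - 2/3 := by
      field_simp
      ring
    rw [h2] at hL
    have hfrac : (1-2*δ)/(1-δ) ≤ 1 - (δ+δ^2+δ^3+δ^4+δ^5) := by
      rw [div_le_iff₀ hd1]
      nlinarith [pow_nonneg h0.le 6]
    have hfrac' : (1-2*δ)*((2/3)/(1-δ)) ≤ (2/3)*(1-(δ+δ^2+δ^3+δ^4+δ^5)) := by
      have e : (1-2*δ)*((2/3)/(1-δ)) = (2/3)*((1-2*δ)/(1-δ)) := by ring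
      rw [e]
      linarith
    have hM' : (1-2*δ) * (Real.log 2 - Real.log 3 + 1)
        - (2/3)*(1-(δ+δ^2+δ^3+δ^4+δ^5)) ≤ (1-2*δ) * Real.log (1-δ) := by
      have e : (1-2*δ) * (Real.log 2 - Real.log 3 + 1 - (2/3)/(1-δ))
          = (1-2*δ) * (Real.log 2 - Real.log 3 + 1) - (1-2*δ)*((2/3)/(1-δ)) := by
        ring
      rw [e] at hM
      linarith
    have egoal : (1-2*δ)*(Real.log (1-δ) - Real.log δ)
        = (1-2*δ)*Real.log (1-δ) + (2*δ)*Real.log δ - Real.log δ := by ring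
    rw [egoal]
    have hd5 : (0:ℝ) ≤ δ^5 := by positivity
    nlinarith [hM', hL, hl2a, hl5b, sq_nonneg (δ^2 + δ/2 - 26/100),
      sq_nonneg (δ - 32/100), hd5]
  · -- easy case: LHS ≤ 0 ≤ RHS
    have hlhs0 : -(2*Real.log 2 + Real.log 3 - Real.log 5) - Real.log δ ≤ 0 := by
      have hlogδ : Real.log (5/12 : ℝ) ≤ Real.log δ :=
        Real.log_le_log (by norm_num) hgt.le
      have h512 : Real.log (5/12 : ℝ) = Real.log 5 - (2*Real.log 2 + Real.log 3) := by
        rw [Real.log_div (by norm_num) (by norm_num),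
          show (12:ℝ) = 2^2*3 by norm_num,
          Real.log_mul (by norm_num) (by norm_num), Real.log_pow]
        push_cast; ring
      rw [h512] at hlogδ
      linarith
    have hrhs0 : 0 ≤ (1-2*δ) * (Real.log (1-δ) - Real.log δ) := by
      rcases le_or_gt δ (1/2) with hhalf | hhalf
      · apply mul_nonneg (by linarith)
        have : Real.log δ ≤ Real.log (1-δ) :=
          Real.log_le_log h0 (by linarith)
        linarith
      · have ha : 1 - 2*δ ≤ 0 := by linarith
        have hb : Real.log (1-δ) - Real.log δ ≤ 0 := by
          have : Real.log (1-δ) ≤ Real.log δ :=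
            Real.log_le_log hd1 (by linarith)
          linarith
        nlinarith [mul_nonneg (neg_nonneg.mpr ha) (neg_nonneg.mpr hb)]
    linarith
end

section
/- Lambert W inversion bounds: defining W̄_{-1}(x) = -W_{-1}(-e^{-x}) for x ≥ 1 (with W_{-1} the negative branch of the Lambert W function), for all y ≥ 1 and x ≥ 1 one has W̄_{-1}(y) ≤ x if and only if y ≤ x - log(x); moreover for all x > 1, x + log(x) ≤ W̄_{-1}(x) ≤ x + log(x) + min{1/2, 1/√x}. -/
/-!
The map `u ↦ u - log u` is a strictly increasing bijection of `[1, ∞)` onto itself and `barW` is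
its inverse, so `barW y ≤ x ↔ y ≤ x - log x`. The lower bound then amounts to
`log x ≤ log (x + log x)`. For the upper bound `x + log x + e`, the estimate
`1 + e + e²/2 ≤ exp e` reduces `log (x + log x + e) ≤ log x + e` to
`log x ≤ (x - 1) e + x e² / 2`; for `e = 1/√x` this is `log t ≤ sinh (log t)` at `t = √x`,
and for `e = 1/2` it is the tangent line of `log` at `8/5`.
-/

/-- `W̄₋₁(x) = -W₋₁(-e^{-x})`: equivalently, the largest solution `u ≥ 1` of
`u - log u = x`. -/
noncomputable def barW (x : ℝ) : ℝ :=
  sSup {u : ℝ | 1 ≤ u ∧ u - Real.log u = x}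

open Real Set

theorem strictMonoOn_sub_log : StrictMonoOn (fun u : ℝ => u - log u) (Ici 1) := by
  intro u (hu : 1 ≤ u) v (hv : 1 ≤ v) huv
  have hu0 : 0 < u := by linarith
  have hlog : log v - log u < v / u - 1 := by
    rw [← log_div (by linarith) hu0.ne']
    exact log_lt_sub_one_of_pos (by positivity) (ne_of_gt ((one_lt_div hu0).mpr huv))
  have hdiv : v / u - 1 ≤ v - u := by
    rw [div_sub_one hu0.ne']
    exact div_le_self (by linarith) hu
  show u - log u < v - log v
  linarith

theorem exists_sub_log_eq {y : ℝ} (hy : 1 ≤ y) : ∃ u, 1 ≤ u ∧ u - log u = y := by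
  have hcont : ContinuousOn (fun u : ℝ => u - log u) (Icc 1 (2 * y)) :=
    continuousOn_id.sub <| continuousOn_log.mono fun u hu =>
      mem_compl_singleton_iff.mpr (by linarith [hu.1])
  have h2y : y ≤ 2 * y - log (2 * y) := by
    rw [log_mul two_ne_zero (by linarith)]
    linarith [log_le_sub_one_of_pos two_pos, log_le_sub_one_of_pos (by linarith : 0 < y)]
  obtain ⟨u, hu, rfl⟩ := intermediate_value_Icc (by linarith) hcont ⟨by simpa using hy, h2y⟩
  exact ⟨u, hu.1, rfl⟩

theorem barW_eq_of_sub_log_eq {u y : ℝ} (hu : 1 ≤ u) (h : u - log u = y) : barW y = u := by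
  have hset : {v : ℝ | 1 ≤ v ∧ v - log v = y} = {u} := by
    ext v
    refine ⟨fun ⟨hv, hvy⟩ => strictMonoOn_sub_log.injOn hv hu (hvy.trans h.symm), ?_⟩
    rintro rfl
    exact ⟨hu, h⟩
  rw [barW, hset, csSup_singleton]

theorem barW_spec {y : ℝ} (hy : 1 ≤ y) : 1 ≤ barW y ∧ barW y - log (barW y) = y := by
  obtain ⟨u, hu, h⟩ := exists_sub_log_eq hy
  rw [barW_eq_of_sub_log_eq hu h]
  exact ⟨hu, h⟩

theorem barW_le_iff {x y : ℝ} (hx : 1 ≤ x) (hy : 1 ≤ y) : barW y ≤ x ↔ y ≤ x - log x := by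
  obtain ⟨hW, hWy⟩ := barW_spec hy
  conv_rhs => rw [← hWy]
  exact (strictMonoOn_sub_log.le_iff_le hW hx).symm

theorem le_barW_iff {x y : ℝ} (hx : 1 ≤ x) (hy : 1 ≤ y) : x ≤ barW y ↔ x - log x ≤ y := by
  obtain ⟨hW, hWy⟩ := barW_spec hy
  conv_rhs => rw [← hWy]
  exact (strictMonoOn_sub_log.le_iff_le hx hW).symm

theorem add_log_le_barW {x : ℝ} (hx : 1 ≤ x) : x + log x ≤ barW x := by
  have hlog : 0 ≤ log x := log_nonneg hx
  rw [le_barW_iff (by linarith) hx]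
  linarith [log_le_log (by linarith) (by linarith : x ≤ x + log x)]

theorem barW_le_add_log_add {x e : ℝ} (hx : 1 ≤ x) (he : 0 ≤ e)
    (h : log x ≤ (x - 1) * e + x * e ^ 2 / 2) : barW x ≤ x + log x + e := by
  have hlog : 0 ≤ log x := log_nonneg hx
  have hexp : x + log x + e ≤ x * exp e := by
    nlinarith [quadratic_le_exp_of_nonneg he]
  have hlog_le : log (x + log x + e) ≤ log x + e :=
    calc log (x + log x + e) ≤ log (x * exp e) := log_le_log (by linarith) hexp
      _ = log x + e := by rw [log_mul (by linarith) (exp_ne_zero e), log_exp]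
  rw [barW_le_iff (by linarith) hx]
  linarith

theorem log_le_sub_inv_div_two {t : ℝ} (ht : 1 ≤ t) : log t ≤ (t - t⁻¹) / 2 := by
  rw [← sinh_log (by linarith)]
  exact self_le_sinh_iff.mpr (log_nonneg ht)

theorem barW_le_add_log_add_inv_sqrt {x : ℝ} (hx : 1 ≤ x) :
    barW x ≤ x + log x + 1 / √x := by
  have ht : 1 ≤ √x := one_le_sqrt.mpr hx
  have hsq : √x ^ 2 = x := sq_sqrt (by linarith)
  refine barW_le_add_log_add hx (by positivity) ?_
  have hlog : log x = 2 * log √x := by rw [log_sqrt (by linarith)]; ring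
  have hrhs : (x - 1) * (1 / √x) + x * (1 / √x) ^ 2 / 2 = √x - (√x)⁻¹ + 1 / 2 := by
    field_simp
    linear_combination (-2 * √x - 1) * hsq
  rw [hlog, hrhs]
  linarith [log_le_sub_inv_div_two ht]

theorem log_eight_fifths_le : log (8 / 5) ≤ 1 / 2 := by
  rw [log_le_iff_le_exp (by norm_num)]
  linarith [quadratic_le_exp_of_nonneg (by norm_num : (0 : ℝ) ≤ 1 / 2)]

theorem barW_le_add_log_add_half {x : ℝ} (hx : 1 ≤ x) : barW x ≤ x + log x + 1 / 2 := by
  refine barW_le_add_log_add hx (by norm_num) ?_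
  have htangent : log (5 / 8 * x) ≤ 5 / 8 * x - 1 := log_le_sub_one_of_pos (by linarith)
  have hlog : log (5 / 8) = -log (8 / 5) := by rw [← log_inv, inv_div]
  rw [log_mul (by norm_num) (by linarith), hlog] at htangent
  linarith [log_eight_fifths_le]

/-- Lambert `W` inversion bounds: for `x, y ≥ 1`, `W̄₋₁(y) ≤ x ↔ y ≤ x - log x`;
moreover, for `x > 1`, `x + log x ≤ W̄₋₁(x) ≤ x + log x + min{1/2, 1/√x}`. -/
theorem barW_inversion_bounds :
    (∀ x y : ℝ, 1 ≤ x → 1 ≤ y → (barW y ≤ x ↔ y ≤ x - Real.log x)) ∧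
    (∀ x : ℝ, 1 < x →
      x + Real.log x ≤ barW x ∧
      barW x ≤ x + Real.log x + min (1 / 2) (1 / Real.sqrt x)) := by
  refine ⟨fun x y hx hy => barW_le_iff hx hy, fun x hx => ⟨add_log_le_barW hx.le, ?_⟩⟩
  rw [← min_add_add_left]
  exact le_min (barW_le_add_log_add_half hx.le) (barW_le_add_log_add_inv_sqrt hx.le)
end
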